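/- arXiv:math/9906028 — 4 statements merged into one kernel-verified Lean document; each statement's English description precedes it below -/
import Mathlib

section
/- Let T : ℕ → ℕ → ℝ satisfy T(1, m) = 0 for all m ≥ 0, T(k, 0) = 1 for all k ≥ 2, and for all k ≥ 2 and m ≥ 1 the recurrence T(k, m) − T(k, m − 1) = ((k(k − 2))^m · ((k − 1)/2)_m) / ((k − 1)^{2m} · (k/2)_m) · T(k − 1, m). Then for all k ≥ 2 and m ≥ 0, T(k, m) = 1 + Σ_{r=1}^{k−2} Σ_{1 ≤ s_r ≤ s_{r−1} ≤ ⋯ ≤ s_1 ≤ m} ∏_{i=1}^{r} (((k − i)² − 1)^{s_i} · ((k − i)/2)_{s_i}) / ((k − i)^{2 s_i} · ((k − i + 1)/2)_{s_i}). -/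
open Finset

/-- Pochhammer symbol `(y)ₘ = ∏_{i=0}^{m-1} (y + i)` -/
noncomputable def poch (y : ℝ) (m : ℕ) : ℝ := ∏ i ∈ Finset.range m, (y + i)

noncomputable def W (k j s : ℕ) : ℝ :=
  (((k - (j + 1)) ^ 2 - 1 : ℕ) : ℝ) ^ s * poch (((k - (j + 1) : ℕ) : ℝ) / 2) s /
    (((k - (j + 1) : ℕ) : ℝ) ^ (2 * s) * poch (((k - (j + 1) + 1 : ℕ) : ℝ) / 2) s)

def Chains (r m : ℕ) : Finset (Fin r → ℕ) :=
  (Fintype.piFinset fun _ : Fin r => Finset.Icc 1 m).filter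
    (fun s => ∀ i j : Fin r, i ≤ j → s j ≤ s i)

noncomputable def S (k r m : ℕ) : ℝ := ∑ s ∈ Chains r m, ∏ i : Fin r, W k i.val (s i)

lemma W_shift (k j s : ℕ) : W k (j + 1) s = W (k - 1) j s := by
  have h : k - (j + 1 + 1) = k - 1 - (j + 1) := by omega
  simp only [W, h]

lemma chains_zero (a : ℕ) : Chains 0 a = {(fun i => i.elim0)} := by
  ext s
  simp only [Chains, Finset.mem_filter, Fintype.mem_piFinset, Finset.mem_singleton]
  constructor
  · rintro -; funext i; exact i.elim0
  · rintro rfl; exact ⟨fun i => i.elim0, fun i => i.elim0⟩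

lemma sum_chains_succ (r m : ℕ) (f : ℕ → ℕ → ℝ) :
    (∑ s ∈ Chains (r + 1) m, ∏ i : Fin (r + 1), f i.val (s i))
      = ∑ a ∈ Finset.Icc 1 m, f 0 a * ∑ t ∈ Chains r a, ∏ i : Fin r, f (i.val + 1) (t i) := by
  simp only [Finset.mul_sum]
  rw [Finset.sum_sigma' (Finset.Icc 1 m) (fun a => Chains r a)
    (fun a t => f 0 a * ∏ i : Fin r, f (i.val + 1) (t i))]
  refine Finset.sum_bij' (fun s _ => (⟨s 0, Fin.tail s⟩ : Σ _ : ℕ, Fin r → ℕ))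
    (fun p _ => Fin.cons p.1 p.2) ?_ ?_ ?_ ?_ ?_
  · intro s hs
    simp only [Chains, Finset.mem_filter, Fintype.mem_piFinset, Finset.mem_Icc] at hs
    obtain ⟨hmem, hchain⟩ := hs
    simp only [Finset.mem_sigma, Chains, Finset.mem_filter, Fintype.mem_piFinset,
      Finset.mem_Icc]
    refine ⟨hmem 0, ⟨fun i => ⟨(hmem i.succ).1, ?_⟩, fun i j hij => ?_⟩⟩
    · exact hchain 0 i.succ (Fin.zero_le _)
    · exact hchain i.succ j.succ (Fin.succ_le_succ_iff.mpr hij)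
  · intro p hp
    simp only [Finset.mem_sigma, Chains, Finset.mem_filter, Fintype.mem_piFinset,
      Finset.mem_Icc] at hp
    obtain ⟨ha, hmem, hchain⟩ := hp
    simp only [Chains, Finset.mem_filter, Fintype.mem_piFinset, Finset.mem_Icc]
    constructor
    · intro i
      induction i using Fin.cases with
      | zero => simpa using ha
      | succ i => simp only [Fin.cons_succ]; exact ⟨(hmem i).1, le_trans (hmem i).2 ha.2⟩
    · intro i j hij
      induction i using Fin.cases with
      | zero =>
        induction j using Fin.cases with
        | zero => exact le_refl _
        | succ j => simp only [Fin.cons_succ, Fin.cons_zero]; exact (hmem j).2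
      | succ i =>
        induction j using Fin.cases with
        | zero => exact absurd hij (by simp [Fin.le_def])
        | succ j =>
          simp only [Fin.cons_succ]
          exact hchain i j (Fin.succ_le_succ_iff.mp hij)
  · intro s _; exact Fin.cons_self_tail s
  · intro p _; simp
  · intro s _
    rw [Fin.prod_univ_succ]
    rfl

lemma S_zero (k a : ℕ) : S k 0 a = 1 := by
  simp [S, chains_zero]

lemma S_one (k m : ℕ) : S k 1 m = ∑ a ∈ Finset.Icc 1 m, W k 0 a := by
  rw [S, sum_chains_succ 0 m (fun j s => W k j s)]
  simp [S_zero, chains_zero]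

lemma S_succ (k r m : ℕ) (_hk : 1 ≤ k) :
    S k (r + 1) m = ∑ a ∈ Finset.Icc 1 m, W k 0 a * S (k - 1) r a := by
  rw [S, sum_chains_succ r m (fun j s => W k j s)]
  refine Finset.sum_congr rfl fun a _ => ?_
  congr 1
  rw [S]
  exact Finset.sum_congr rfl fun t _ => Finset.prod_congr rfl fun i _ => W_shift k i.val (t i)

lemma W_zero (k : ℕ) (hk : 2 ≤ k) (m : ℕ) :
    W k 0 m = ((k * (k - 2) : ℕ) : ℝ) ^ m * poch (((k - 1 : ℕ) : ℝ) / 2) m /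
      (((k - 1 : ℕ) : ℝ) ^ (2 * m) * poch ((k : ℝ) / 2) m) := by
  have h1 : (k - (0 + 1)) ^ 2 - 1 = k * (k - 2) := by
    obtain ⟨n, rfl⟩ := Nat.exists_eq_add_of_le hk
    have e1 : 2 + n - (0 + 1) = n + 1 := by omega
    have e2 : 2 + n - 2 = n := by omega
    rw [e1, e2]
    calc (n + 1) ^ 2 - 1 = (n ^ 2 + 2 * n + 1) - 1 := by ring_nf
    _ = n ^ 2 + 2 * n := Nat.add_sub_cancel _ _
    _ = (2 + n) * n := by ring
  have h2 : k - (0 + 1) + 1 = k := by omega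
  have h3 : k - (0 + 1) = k - 1 := by omega
  rw [W, h1, h2, h3]

lemma sum_Icc_shift (n : ℕ) (g : ℕ → ℝ) :
    ∑ r ∈ Finset.Icc 1 (n + 1), g r = g 1 + ∑ r ∈ Finset.Icc 1 n, g (r + 1) := by
  induction n with
  | zero => simp
  | succ n ih =>
    rw [Finset.sum_Icc_succ_top (by omega : 1 ≤ n + 1 + 1), ih,
      Finset.sum_Icc_succ_top (by omega : 1 ≤ n + 1)]
    ring

theorem stmt2 (T : ℕ → ℕ → ℝ)
    (hT1 : ∀ m : ℕ, T 1 m = 0)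
    (hT0 : ∀ k : ℕ, 2 ≤ k → T k 0 = 1)
    (hTrec : ∀ k m : ℕ, 2 ≤ k → 1 ≤ m →
      T k m - T k (m - 1) =
        ((k * (k - 2) : ℕ) : ℝ) ^ m * poch (((k - 1 : ℕ) : ℝ) / 2) m /
          (((k - 1 : ℕ) : ℝ) ^ (2 * m) * poch ((k : ℝ) / 2) m) * T (k - 1) m) :
    ∀ k m : ℕ, 2 ≤ k →
      T k m =
        1 + ∑ r ∈ Finset.Icc 1 (k - 2),
          ∑ s ∈ (Fintype.piFinset fun _ : Fin r => Finset.Icc 1 m).filter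
              (fun s => ∀ i j : Fin r, i ≤ j → s j ≤ s i),
            ∏ i : Fin r,
              (((k - (i.val + 1)) ^ 2 - 1 : ℕ) : ℝ) ^ s i *
                  poch (((k - (i.val + 1) : ℕ) : ℝ) / 2) (s i) /
                (((k - (i.val + 1) : ℕ) : ℝ) ^ (2 * s i) *
                  poch (((k - (i.val + 1) + 1 : ℕ) : ℝ) / 2) (s i)) := by
  have tel : ∀ k, 2 ≤ k → ∀ m, T k m = 1 + ∑ t ∈ Finset.Icc 1 m, W k 0 t * T (k - 1) t := by
    intro k hk m
    induction m with
    | zero => simp [hT0 k hk]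
    | succ n ih =>
      have hrec := hTrec k (n + 1) hk (by omega)
      simp only [Nat.add_sub_cancel] at hrec
      have hstep : T k (n + 1) = T k n +
          ((k * (k - 2) : ℕ) : ℝ) ^ (n + 1) * poch (((k - 1 : ℕ) : ℝ) / 2) (n + 1) /
            (((k - 1 : ℕ) : ℝ) ^ (2 * (n + 1)) * poch ((k : ℝ) / 2) (n + 1)) * T (k - 1) (n + 1) := by
        linarith [hrec]
      rw [hstep, ih, Finset.sum_Icc_succ_top (by omega : 1 ≤ n + 1), W_zero k hk]
      ring
  have key : ∀ k, 2 ≤ k → ∀ m, T k m = 1 + ∑ r ∈ Finset.Icc 1 (k - 2), S k r m := by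
    intro k hk
    induction k, hk using Nat.le_induction with
    | base =>
      intro m
      rw [tel 2 (le_refl 2) m]
      simp [hT1]
    | succ k hk ih =>
      intro m
      rw [tel (k + 1) (by omega) m]
      simp only [Nat.add_sub_cancel]
      have expand : ∀ t ∈ Finset.Icc 1 m, W (k + 1) 0 t * T k t =
          W (k + 1) 0 t + ∑ r ∈ Finset.Icc 1 (k - 2), W (k + 1) 0 t * S k r t := by
        intro t _
        rw [ih t, mul_add, mul_one, Finset.mul_sum]
      rw [Finset.sum_congr rfl expand, Finset.sum_add_distrib, Finset.sum_comm]
      have hSr : ∀ r, ∑ t ∈ Finset.Icc 1 m, W (k + 1) 0 t * S k r t = S (k + 1) (r + 1) m := by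
        intro r
        rw [S_succ (k + 1) r m (by omega)]
        simp only [Nat.add_sub_cancel]
      have hgoal : (1 : ℝ) + ∑ r ∈ Finset.Icc 1 (k + 1 - 2), S (k + 1) r m =
          1 + (∑ t ∈ Finset.Icc 1 m, W (k + 1) 0 t +
            ∑ r ∈ Finset.Icc 1 (k - 2), ∑ t ∈ Finset.Icc 1 m, W (k + 1) 0 t * S k r t) := by
        rw [show k + 1 - 2 = (k - 2) + 1 by omega, sum_Icc_shift]
        rw [S_one]
        congr 1
        congr 1
        exact Finset.sum_congr rfl fun r _ => (hSr r).symm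
      rw [← hgoal]
  intro k m hk
  rw [key k hk m]
  rfl
end

section
/- Let k ≥ 1 be an integer and m, n nonnegative integers, and let I_k(m, n) = ∫_{[0,∞)^k} (e₂(x))^m (e₁(x))^n e^{−e₁(x)} dx. Then I_k(m, n + 1) = (2m + n + k) · I_k(m, n). -/
open MeasureTheory Finset

/-- `e₁(x) = ∑ᵢ xᵢ` -/
noncomputable def e1 {k : ℕ} (x : Fin k → ℝ) : ℝ := ∑ i, x i

/-- `e₂(x) = ∑_{i<j} xᵢ xⱼ` -/
noncomputable def e2 {k : ℕ} (x : Fin k → ℝ) : ℝ := ∑ i, ∑ j ∈ Finset.Ioi i, x i * x j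

/-- `I_k(m, n) = ∫_{[0,∞)^k} (e₂ x)^m (e₁ x)^n e^{-e₁ x} dx` -/
noncomputable def I (k m n : ℕ) : ℝ :=
  ∫ x : Fin k → ℝ in Set.univ.pi fun _ => Set.Ici (0 : ℝ),
    e2 x ^ m * e1 x ^ n * Real.exp (-(e1 x))

/-!
Put `J(s) = ∫_{[0,∞)^k} e₂(x)^m e₁(x)^n e^{-s e₁(x)} dx`. The substitution `x ↦ s • x` maps the
orthant onto itself, and `e₂^m e₁^n` is homogeneous of degree `2m + n`, so
`J(s) = s^{-(2m + n + k)} J(1)` for `s > 0`. Differentiating at `s = 1`, under the integral sign on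
the left (dominated by `C e^{-e₁/4}` near `s = 1`), gives `-I_k(m, n+1) = -(2m + n + k) I_k(m, n)`.
-/

open scoped Pointwise

section Derivative

variable {α : Type*} [MeasurableSpace α] {μ : Measure α} {A : Set α} {h φ : α → ℝ}

theorem hasDerivAt_setIntegral_mul_exp_neg_mul (hA : MeasurableSet A)
    (hφA : ∀ x ∈ A, 0 ≤ φ x) (hh : AEStronglyMeasurable h (μ.restrict A))
    (hφ : AEStronglyMeasurable φ (μ.restrict A))
    (h_int : IntegrableOn (fun x => h x * Real.exp (-(φ x / 2))) A μ)
    (hφ_int : IntegrableOn (fun x => h x * φ x * Real.exp (-(φ x / 2))) A μ) :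
    HasDerivAt (fun s => ∫ x in A, h x * Real.exp (-(s * φ x)) ∂μ)
      (-∫ x in A, h x * φ x * Real.exp (-φ x) ∂μ) 1 := by
  have h_meas : ∀ s : ℝ, AEStronglyMeasurable (fun x => h x * Real.exp (-(s * φ x)))
      (μ.restrict A) := fun s => by fun_prop
  have hball : ∀ s ∈ Metric.ball (1 : ℝ) (1 / 2), 1 / 2 ≤ s := fun s hs => by
    rw [Metric.mem_ball, Real.dist_eq, abs_lt] at hs
    linarith
  have half_le : ∀ x ∈ A, ∀ s, 1 / 2 ≤ s → φ x / 2 ≤ s * φ x :=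
    fun x hx s hs => by nlinarith [hφA x hx]
  have hF_int : IntegrableOn (fun x => h x * Real.exp (-(1 * φ x))) A μ := by
    refine h_int.norm.mono' (h_meas 1) ?_
    filter_upwards [ae_restrict_mem hA] with x hx
    simp only [norm_mul, Real.norm_eq_abs, Real.abs_exp]
    gcongr
    exact half_le x hx 1 (by norm_num)
  have key := hasDerivAt_integral_of_dominated_loc_of_deriv_le
    (F := fun s x => h x * Real.exp (-(s * φ x)))
    (F' := fun s x => -(h x * φ x * Real.exp (-(s * φ x))))
    (bound := fun x => ‖h x * φ x * Real.exp (-(φ x / 2))‖)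
    (Metric.ball_mem_nhds (1 : ℝ) (by norm_num : (0 : ℝ) < 1 / 2))
    (Filter.Eventually.of_forall h_meas) hF_int (by fun_prop) ?_ hφ_int.norm ?_
  · rw [← integral_neg]
    simpa using key.2
  · filter_upwards [ae_restrict_mem hA] with x hx s hs
    simp only [norm_neg, norm_mul, Real.norm_eq_abs, Real.abs_exp]
    gcongr
    exact half_le x hx s (hball s hs)
  · refine Filter.Eventually.of_forall fun x s _ => ?_
    exact (((hasDerivAt_id' s).mul_const (φ x)).neg.exp.const_mul (h x)).congr_deriv
      (by simp only [Pi.neg_apply]; ring)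

end Derivative

section Homogeneous

open Module

variable {E : Type*} [NormedAddCommGroup E] [NormedSpace ℝ E] [FiniteDimensional ℝ E]
  [MeasurableSpace E] [BorelSpace E] {μ : Measure E} [μ.IsAddHaarMeasure]
  {A : Set E} {h φ : E → ℝ} {d : ℕ}

theorem setIntegral_mul_exp_neg_mul_of_homogeneous (hA : ∀ s : ℝ, 0 < s → s • A = A)
    (hh : ∀ s : ℝ, 0 < s → ∀ x, h (s • x) = s ^ d * h x)
    (hφ : ∀ s : ℝ, 0 < s → ∀ x, φ (s • x) = s * φ x) {s : ℝ} (hs : 0 < s) :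
    ∫ x in A, h x * Real.exp (-(s * φ x)) ∂μ =
      s ^ (-(d + finrank ℝ E : ℤ)) * ∫ x in A, h x * Real.exp (-φ x) ∂μ := by
  have hscale := Measure.setIntegral_comp_smul_of_pos μ (fun x => h x * Real.exp (-φ x)) A hs
  simp only [hh s hs, hφ s hs, hA s hs, mul_assoc, integral_const_mul, smul_eq_mul] at hscale
  rw [zpow_neg, zpow_add₀ hs.ne', zpow_natCast, zpow_natCast, mul_inv, mul_assoc, ← hscale,
    inv_mul_cancel_left₀ (pow_ne_zero d hs.ne')]

theorem setIntegral_mul_mul_exp_neg_of_homogeneous (hA : MeasurableSet A)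
    (hA_smul : ∀ s : ℝ, 0 < s → s • A = A) (hφA : ∀ x ∈ A, 0 ≤ φ x)
    (hh : AEStronglyMeasurable h (μ.restrict A)) (hφ : AEStronglyMeasurable φ (μ.restrict A))
    (hh_hom : ∀ s : ℝ, 0 < s → ∀ x, h (s • x) = s ^ d * h x)
    (hφ_hom : ∀ s : ℝ, 0 < s → ∀ x, φ (s • x) = s * φ x)
    (h_int : IntegrableOn (fun x => h x * Real.exp (-(φ x / 2))) A μ)
    (hφ_int : IntegrableOn (fun x => h x * φ x * Real.exp (-(φ x / 2))) A μ) :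
    ∫ x in A, h x * φ x * Real.exp (-φ x) ∂μ =
      (d + finrank ℝ E) * ∫ x in A, h x * Real.exp (-φ x) ∂μ := by
  have h_scaling : HasDerivAt (fun s => ∫ x in A, h x * Real.exp (-(s * φ x)) ∂μ)
      (-(d + finrank ℝ E) * ∫ x in A, h x * Real.exp (-φ x) ∂μ) 1 := by
    have := (hasDerivAt_zpow (-(d + finrank ℝ E : ℤ)) (1 : ℝ) (.inl one_ne_zero)).mul_const
      (∫ x in A, h x * Real.exp (-φ x) ∂μ)
    refine (this.congr_deriv (by rw [one_zpow]; push_cast; ring)).congr_of_eventuallyEq ?_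
    filter_upwards [eventually_gt_nhds zero_lt_one] with s hs
    exact setIntegral_mul_exp_neg_mul_of_homogeneous hA_smul hh_hom hφ_hom hs
  have := (hasDerivAt_setIntegral_mul_exp_neg_mul hA hφA hh hφ h_int hφ_int).unique h_scaling
  linarith

end Homogeneous

def orthant (k : ℕ) : Set (Fin k → ℝ) := Set.univ.pi fun _ => Set.Ici 0

section Orthant

variable {k : ℕ}

@[fun_prop]
theorem continuous_e1 : Continuous (e1 : (Fin k → ℝ) → ℝ) := by
  unfold e1; fun_prop

@[fun_prop]
theorem continuous_e2 : Continuous (e2 : (Fin k → ℝ) → ℝ) := by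
  unfold e2; fun_prop

theorem e1_smul (c : ℝ) (x : Fin k → ℝ) : e1 (c • x) = c * e1 x := by
  simp [e1, mul_sum]

theorem e2_smul (c : ℝ) (x : Fin k → ℝ) : e2 (c • x) = c ^ 2 * e2 x := by
  simp only [e2, mul_sum, Pi.smul_apply, smul_eq_mul]
  exact sum_congr rfl fun i _ => sum_congr rfl fun j _ => by ring

theorem e1_nonneg {x : Fin k → ℝ} (hx : x ∈ orthant k) : 0 ≤ e1 x :=
  sum_nonneg fun i _ => hx i (Set.mem_univ i)

theorem e2_nonneg {x : Fin k → ℝ} (hx : x ∈ orthant k) : 0 ≤ e2 x :=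
  sum_nonneg fun i _ => sum_nonneg fun j _ =>
    mul_nonneg (hx i (Set.mem_univ i)) (hx j (Set.mem_univ j))

theorem e2_le_e1_sq {x : Fin k → ℝ} (hx : x ∈ orthant k) : e2 x ≤ e1 x ^ 2 := by
  rw [sq, e1, sum_mul_sum, e2]
  exact sum_le_sum fun i _ => sum_le_sum_of_subset_of_nonneg (subset_univ _) fun j _ _ =>
    mul_nonneg (hx i (Set.mem_univ i)) (hx j (Set.mem_univ j))

theorem measurableSet_orthant : MeasurableSet (orthant k) :=
  MeasurableSet.univ_pi fun _ => measurableSet_Ici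

theorem smul_orthant {s : ℝ} (hs : 0 < s) : s • orthant k = orthant k := by
  rw [orthant, Set.smul_set_pi₀ hs.ne']
  congr 1
  ext1 i
  simp [LinearOrderedField.smul_Ici hs]

theorem integrableOn_exp_neg_mul_e1 {c : ℝ} (hc : 0 < c) :
    IntegrableOn (fun x => Real.exp (-c * e1 x)) (orthant k) := by
  have h : Integrable (fun x : Fin k → ℝ => ∏ i, Real.exp (-c * x i))
      (Measure.pi fun _ => volume.restrict (Set.Ici 0)) :=
    Integrable.fintype_prod fun _ =>
      (integrableOn_Ici_iff_integrableOn_Ioi).2 (exp_neg_integrableOn_Ioi 0 hc)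
  rw [IntegrableOn, orthant, volume_pi, Measure.restrict_pi_pi]
  simpa only [e1, mul_sum, Real.exp_sum] using h

theorem pow_mul_exp_neg_half_le (D : ℕ) {t : ℝ} (ht : 0 ≤ t) :
    t ^ D * Real.exp (-(t / 2)) ≤ (D.factorial * 4 ^ D : ℝ) * Real.exp (-(1 / 4) * t) := by
  have h := Real.pow_div_factorial_le_exp (t / 4) (by positivity) D
  rw [div_le_iff₀ (by positivity)] at h
  calc t ^ D * Real.exp (-(t / 2)) = 4 ^ D * (t / 4) ^ D * Real.exp (-(t / 2)) := by
        rw [div_pow, mul_div_cancel₀ _ (by positivity)]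
    _ ≤ 4 ^ D * (Real.exp (t / 4) * D.factorial) * Real.exp (-(t / 2)) := by gcongr
    _ = (D.factorial * 4 ^ D : ℝ) * Real.exp (-(1 / 4) * t) := by
        rw [mul_assoc, mul_comm (Real.exp _), mul_assoc, ← Real.exp_add]
        ring_nf

theorem integrableOn_e2_pow_mul_e1_pow_mul_exp_neg_half (m p : ℕ) :
    IntegrableOn (fun x => e2 x ^ m * e1 x ^ p * Real.exp (-(e1 x / 2))) (orthant k) := by
  refine ((integrableOn_exp_neg_mul_e1 (by norm_num : (0 : ℝ) < 1 / 4)).const_mul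
    ((2 * m + p).factorial * 4 ^ (2 * m + p) : ℝ)).mono' (by fun_prop) ?_
  filter_upwards [ae_restrict_mem measurableSet_orthant] with x hx
  have he1 := e1_nonneg hx
  have he2 := e2_nonneg hx
  rw [Real.norm_of_nonneg (by positivity)]
  calc e2 x ^ m * e1 x ^ p * Real.exp (-(e1 x / 2))
      ≤ (e1 x ^ 2) ^ m * e1 x ^ p * Real.exp (-(e1 x / 2)) := by gcongr; exact e2_le_e1_sq hx
    _ = e1 x ^ (2 * m + p) * Real.exp (-(e1 x / 2)) := by rw [← pow_mul, pow_add]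
    _ ≤ _ := pow_mul_exp_neg_half_le _ he1

end Orthant

theorem stmt5_general (k m n : ℕ) :
    I k m (n + 1) = (2 * (m : ℝ) + n + k) * I k m n := by
  have h_euler := setIntegral_mul_mul_exp_neg_of_homogeneous (μ := volume) (d := 2 * m + n)
    (h := fun x : Fin k → ℝ => e2 x ^ m * e1 x ^ n) measurableSet_orthant
    (fun s hs => smul_orthant hs) (fun x hx => e1_nonneg hx) (by fun_prop) (by fun_prop)
    (fun s _ x => by simp only [e2_smul, e1_smul]; ring) (fun s _ x => e1_smul s x)
    (integrableOn_e2_pow_mul_e1_pow_mul_exp_neg_half m n)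
    (by simpa only [pow_succ, mul_assoc] using
      integrableOn_e2_pow_mul_e1_pow_mul_exp_neg_half m (n + 1))
  rw [Module.finrank_fin_fun] at h_euler
  have h_succ : I k m (n + 1) =
      ∫ x in orthant k, e2 x ^ m * e1 x ^ n * e1 x * Real.exp (-e1 x) := by
    simp only [I, orthant, pow_succ, mul_assoc]
  rw [h_succ, h_euler, I, orthant]
  push_cast
  ring

theorem stmt5 (k m n : ℕ) (hk : 1 ≤ k) :
    I k m (n + 1) = (2 * (m : ℝ) + n + k) * I k m n :=
  stmt5_general k m n
end

section
/- For all nonnegative integers m and n, ∫_0^∞ ∫_0^∞ (x y)^m (x + y)^n e^{−(x+y)} dx dy = (m!)² · (2m + n + 1)! / (2m + 1)!. -/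
open MeasureTheory Finset

lemma hockey (b n : ℕ) : ∑ j ∈ range (n+1), (b+j).choose j = (b+n+1).choose n := by
  induction n with
  | zero => simp
  | succ n ih =>
    rw [Finset.sum_range_succ, ih]
    have : b + (n+1) + 1 = (b + n + 1) + 1 := by omega
    rw [this, Nat.choose_succ_succ']
    rfl

lemma bid (a b n : ℕ) :
    ∑ k ∈ range (n+1), (a+k).choose k * (b+(n-k)).choose (n-k) = (a+b+n+1).choose n := by
  induction a generalizing n with
  | zero =>
    have h1 : ∀ k ∈ range (n+1), (0+k).choose k * (b+(n-k)).choose (n-k)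
        = (b+(n-k)).choose (n-k) := by
      intro k _; simp
    rw [Finset.sum_congr rfl h1]
    have h2 := Finset.sum_range_reflect (fun k => (b+(n-k)).choose (n-k)) (n+1)
    simp only [Nat.add_sub_cancel] at h2
    have h3 : ∀ j ∈ range (n+1), (b+(n-(n-j))).choose (n-(n-j)) = (b+j).choose j := by
      intro j hj
      rw [Finset.mem_range] at hj
      rw [Nat.sub_sub_self (by omega)]
    rw [← h2, Finset.sum_congr rfl h3, hockey]
    congr 1
    omega
  | succ a iha =>
    induction n with
    | zero => simp
    | succ n ihn =>
      rw [Finset.sum_range_succ']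
      have h1 : ∀ i ∈ range (n+1), (a+1+(i+1)).choose (i+1) * (b+(n+1-(i+1))).choose (n+1-(i+1))
          = (a+1+i).choose i * (b+(n-i)).choose (n-i)
            + (a+(i+1)).choose (i+1) * (b+(n+1-(i+1))).choose (n+1-(i+1)) := by
        intro i _
        have e1 : a+1+(i+1) = (a+1+i)+1 := by omega
        rw [e1, Nat.choose_succ_succ', add_mul]
        congr 3 <;> omega
      rw [Finset.sum_congr rfl h1, Finset.sum_add_distrib, ihn]
      have h2 : (∑ i ∈ range (n+1), (a+(i+1)).choose (i+1) * (b+(n+1-(i+1))).choose (n+1-(i+1)))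
          + (a+1+0).choose 0 * (b+(n+1-0)).choose (n+1-0)
          = ∑ k ∈ range (n+2), (a+k).choose k * (b+(n+1-k)).choose (n+1-k) := by
        conv_rhs => rw [Finset.sum_range_succ']
        congr 1
        simp
      rw [add_assoc, h2, iha (n+1)]
      have e2 : a+1+b+(n+1)+1 = (a+b+(n+1)+1)+1 := by omega
      have e3 : a+1+b+n+1 = a+b+(n+1)+1 := by omega
      rw [e3, e2]
      conv_rhs => rw [Nat.choose_succ_succ']

lemma integrable_pow_exp (k : ℕ) :
    IntegrableOn (fun x : ℝ => x ^ k * Real.exp (-x)) (Set.Ioi 0) := by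
  have h := Real.GammaIntegral_convergent (s := k + 1) (by positivity)
  apply (h.congr_fun ?_ measurableSet_Ioi)
  intro x hx
  simp [add_sub_cancel_right, Real.rpow_natCast, mul_comm]

lemma integral_pow_exp (k : ℕ) :
    ∫ x in Set.Ioi (0:ℝ), x ^ k * Real.exp (-x) = k.factorial := by
  have h := Real.Gamma_eq_integral (s := k + 1) (by positivity)
  rw [Real.Gamma_nat_eq_factorial] at h
  rw [h]
  apply setIntegral_congr_fun measurableSet_Ioi
  intro x hx
  simp [add_sub_cancel_right, Real.rpow_natCast, mul_comm]

lemma natkey (m n : ℕ) :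
    (∑ k ∈ range (n+1), n.choose k * ((m+k).factorial * (m+(n-k)).factorial))
      * (2*m+1).factorial = m.factorial^2 * (2*m+n+1).factorial := by
  have term : ∀ k ∈ range (n+1), n.choose k * ((m+k).factorial * (m+(n-k)).factorial)
      = (m.factorial^2 * n.factorial) * ((m+k).choose k * (m+(n-k)).choose (n-k)) := by
    intro k hk
    rw [Finset.mem_range] at hk
    have h1 := Nat.choose_mul_factorial_mul_factorial (show k ≤ m+k by omega)
    have h2 := Nat.choose_mul_factorial_mul_factorial (show n-k ≤ m+(n-k) by omega)
    have h3 := Nat.choose_mul_factorial_mul_factorial (show k ≤ n by omega)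
    rw [Nat.add_sub_cancel] at h1 h2
    rw [← h1, ← h2, ← h3]
    ring
  rw [Finset.sum_congr rfl term, ← Finset.mul_sum, bid m m n]
  have e1 : m+m+n+1 = 2*m+n+1 := by omega
  have h4 := Nat.choose_mul_factorial_mul_factorial (show n ≤ 2*m+n+1 by omega)
  have e2 : 2*m+n+1-n = 2*m+1 := by omega
  rw [e2] at h4
  rw [e1, ← h4]
  ring

open Finset in
theorem stmt8 (m n : ℕ) :
    ∫ y in Set.Ioi (0 : ℝ), ∫ x in Set.Ioi (0 : ℝ),
        (x * y) ^ m * (x + y) ^ n * Real.exp (-(x + y)) =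
      ((m.factorial : ℝ)) ^ 2 * ((2 * m + n + 1).factorial : ℝ) /
        ((2 * m + 1).factorial : ℝ) := by
  have key : ∀ x y : ℝ, (x * y) ^ m * (x + y) ^ n * Real.exp (-(x + y))
      = ∑ k ∈ range (n+1), ((n.choose k : ℝ) * (y ^ (m+(n-k)) * Real.exp (-y)))
          * (x ^ (m+k) * Real.exp (-x)) := by
    intro x y
    rw [add_pow, Finset.mul_sum, Finset.sum_mul]
    apply Finset.sum_congr rfl
    intro k _
    simp only [mul_pow, neg_add, Real.exp_add, pow_add]
    ring
  have hinner : ∀ y : ℝ, (∫ x in Set.Ioi (0:ℝ),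
        (x * y) ^ m * (x + y) ^ n * Real.exp (-(x + y)))
      = ∑ k ∈ range (n+1), ((n.choose k : ℝ) * ((m+k).factorial : ℝ))
          * (y ^ (m+(n-k)) * Real.exp (-y)) := by
    intro y
    simp_rw [key]
    rw [integral_finset_sum]
    · apply Finset.sum_congr rfl
      intro k _
      rw [integral_const_mul, integral_pow_exp]
      ring
    · intro k _
      exact (integrable_pow_exp (m+k)).const_mul _
  simp_rw [hinner]
  rw [integral_finset_sum _ (fun k _ => (integrable_pow_exp (m+(n-k))).const_mul _)]
  simp_rw [integral_const_mul, integral_pow_exp]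
  have h0 : ((2*m+1).factorial : ℝ) ≠ 0 := by
    exact_mod_cast (Nat.factorial_pos _).ne'
  rw [eq_div_iff h0]
  have hc := congrArg (Nat.cast : ℕ → ℝ) (natkey m n)
  push_cast at hc
  rw [← hc]
  congr 1
  apply Finset.sum_congr rfl
  intro k _
  ring
end

section
/- For all nonnegative integers m and n, ∫_{[0,∞)^3} (x₁x₂ + x₁x₃ + x₂x₃)^m (x₁ + x₂ + x₃)^n e^{−(x₁+x₂+x₃)} dx₁ dx₂ dx₃ = (m! · (2m + n + 2)! · (3/2)_m / (2m + 2)!) · (4/3)^m · (1 + Σ_{s=1}^m (3^s · s!) / (4^s · (3/2)_s)). -/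
open MeasureTheory Finset

/-!
Writing `x₀x₁ + x₀x₂ + x₁x₂ = x₀x₁ + (x₀ + x₁)x₂` and `x₀ + x₁ + x₂ = (x₀ + x₁) + x₂`, three
applications of the binomial theorem turn the integrand into a sum of monomials times
`e^{-(x₀+x₁+x₂)}`, each of which integrates to a product of factorials (Gamma integrals). Two of
the three binomial sums then collapse by the discrete beta identity
`∑_{i+j=n} C(n,i) (p+i)! (q+j)! = p! q! (p+q+n+1)! / (p+q+1)!`, leaving
`(2m+n+2)!/(2m+2)! · m! · L(m)` with `L(m) = ∑_{i ≤ m} i! (m+i+1)! / (2i+1)!`.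
A telescoping sum gives `L(m+1) = (4/3)(m + 3/2) L(m) + (m+1)!`, which is also the recurrence of
`(4/3)^m (3/2)_m T(3,m)`; both equal `1` at `m = 0`.
-/

open Real Set Nat

lemma integrableOn_Ici_pow_mul_exp_neg (k : ℕ) :
    IntegrableOn (fun x : ℝ => x ^ k * exp (-x)) (Ici 0) := by
  rw [integrableOn_Ici_iff_integrableOn_Ioi]
  refine (GammaIntegral_convergent (s := k + 1) (by positivity)).congr_fun (fun x _ => ?_)
    measurableSet_Ioi
  simp only [add_sub_cancel_right, rpow_natCast, mul_comm]

lemma integral_Ici_pow_mul_exp_neg (k : ℕ) :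
    ∫ x in Ici (0 : ℝ), x ^ k * exp (-x) = k ! := by
  rw [integral_Ici_eq_integral_Ioi, ← Gamma_nat_eq_factorial, Gamma_eq_integral (by positivity)]
  simp only [add_sub_cancel_right, rpow_natCast, mul_comm]

section Orthant

variable {ι : Type*} [Fintype ι]

lemma integrableOn_pi_Ici_prod_pow_mul_exp_neg (a : ι → ℕ) :
    IntegrableOn (fun x : ι → ℝ => ∏ i, x i ^ a i * exp (-x i)) (univ.pi fun _ => Ici 0) := by
  rw [IntegrableOn, volume_pi, Measure.restrict_pi_pi]
  exact Integrable.fintype_prod fun i => integrableOn_Ici_pow_mul_exp_neg (a i)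

lemma integral_pi_Ici_prod_pow_mul_exp_neg (a : ι → ℕ) :
    ∫ x : ι → ℝ in univ.pi (fun _ => Ici 0), ∏ i, x i ^ a i * exp (-x i) = ∏ i, ((a i)! : ℝ) := by
  rw [volume_pi, Measure.restrict_pi_pi,
    integral_fintype_prod_eq_prod (fun i x => x ^ a i * exp (-x))]
  exact prod_congr rfl fun i _ => integral_Ici_pow_mul_exp_neg (a i)

end Orthant

lemma monomial_mul_exp_neg_eq_prod (a b c : ℕ) (x : Fin 3 → ℝ) :
    x 0 ^ a * x 1 ^ b * x 2 ^ c * exp (-(x 0 + x 1 + x 2)) =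
      ∏ i, x i ^ ![a, b, c] i * exp (-x i) := by
  simp only [Fin.prod_univ_three, neg_add, exp_add, Matrix.cons_val_zero, Matrix.cons_val_one,
    Matrix.cons_val_two, Matrix.head_cons, Matrix.tail_cons]
  ring

lemma integrableOn_monomial_mul_exp_neg (a b c : ℕ) :
    IntegrableOn (fun x : Fin 3 → ℝ => x 0 ^ a * x 1 ^ b * x 2 ^ c * exp (-(x 0 + x 1 + x 2)))
      (univ.pi fun _ => Ici 0) := by
  simpa only [monomial_mul_exp_neg_eq_prod] using
    integrableOn_pi_Ici_prod_pow_mul_exp_neg ![a, b, c]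

lemma setIntegral_monomial_mul_exp_neg (a b c : ℕ) :
    ∫ x : Fin 3 → ℝ in univ.pi (fun _ => Ici 0),
        x 0 ^ a * x 1 ^ b * x 2 ^ c * exp (-(x 0 + x 1 + x 2)) = a ! * b ! * c ! := by
  simp_rw [monomial_mul_exp_neg_eq_prod]
  rw [integral_pi_Ici_prod_pow_mul_exp_neg]
  simp only [Fin.prod_univ_three, Matrix.cons_val_zero, Matrix.cons_val_one, Matrix.cons_val_two,
    Matrix.head_cons, Matrix.tail_cons]

lemma esymm_two_pow_mul_esymm_one_pow_eq_sum (m n : ℕ) (x y z : ℝ) :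
    (x * y + x * z + y * z) ^ m * (x + y + z) ^ n =
      ∑ ij ∈ antidiagonal m, ∑ kl ∈ antidiagonal n, ∑ ab ∈ antidiagonal (ij.2 + kl.1),
        (m.choose ij.1 * n.choose kl.1 * (ij.2 + kl.1).choose ab.1 : ℝ) *
          (x ^ (ij.1 + ab.1) * y ^ (ij.1 + ab.2) * z ^ (ij.2 + kl.2)) := by
  rw [show x * y + x * z + y * z = x * y + (x + y) * z by ring,
    (Commute.all _ _).add_pow', (Commute.all _ _).add_pow', sum_mul_sum]
  refine sum_congr rfl fun ij _ => sum_congr rfl fun kl _ => ?_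
  have hfactor : m.choose ij.1 • ((x * y) ^ ij.1 * ((x + y) * z) ^ ij.2) *
      n.choose kl.1 • ((x + y) ^ kl.1 * z ^ kl.2) =
        (m.choose ij.1 * n.choose kl.1 : ℝ) * (x * y) ^ ij.1 * z ^ (ij.2 + kl.2) *
          (x + y) ^ (ij.2 + kl.1) := by
    simp only [nsmul_eq_mul, mul_pow, pow_add]
    ring
  rw [hfactor, (Commute.all x y).add_pow', mul_sum]
  refine sum_congr rfl fun ab _ => ?_
  simp only [nsmul_eq_mul]
  ring

lemma setIntegral_esymm_pow_mul_exp_neg_eq_sum (m n : ℕ) :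
    ∫ x : Fin 3 → ℝ in univ.pi fun _ => Ici 0,
        (x 0 * x 1 + x 0 * x 2 + x 1 * x 2) ^ m * (x 0 + x 1 + x 2) ^ n *
          exp (-(x 0 + x 1 + x 2)) =
      ∑ ij ∈ antidiagonal m, ∑ kl ∈ antidiagonal n, ∑ ab ∈ antidiagonal (ij.2 + kl.1),
        (m.choose ij.1 * n.choose kl.1 * (ij.2 + kl.1).choose ab.1 : ℝ) *
          ((ij.1 + ab.1)! * (ij.1 + ab.2)! * (ij.2 + kl.2)!) := by
  simp_rw [esymm_two_pow_mul_esymm_one_pow_eq_sum, sum_mul, mul_assoc _ (_ * _ * _) (exp _)]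
  have hint : ∀ a b c, Integrable
      (fun x : Fin 3 → ℝ => x 0 ^ a * x 1 ^ b * x 2 ^ c * exp (-(x 0 + x 1 + x 2)))
      (volume.restrict (univ.pi fun _ => Ici 0)) := integrableOn_monomial_mul_exp_neg
  rw [integral_finsetSum _ fun ij _ => integrable_finsetSum _ fun kl _ =>
    integrable_finsetSum _ fun ab _ => (hint _ _ _).const_mul _]
  refine sum_congr rfl fun ij _ => ?_
  rw [integral_finsetSum _ fun kl _ => integrable_finsetSum _ fun ab _ =>
    (hint _ _ _).const_mul _]
  refine sum_congr rfl fun kl _ => ?_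
  rw [integral_finsetSum _ fun ab _ => (hint _ _ _).const_mul _]
  refine sum_congr rfl fun ab _ => ?_
  rw [integral_const_mul, setIntegral_monomial_mul_exp_neg]

lemma sum_antidiagonal_choose_mul_factorial_mul_factorial (p q n : ℕ) :
    ∑ ij ∈ antidiagonal n, (n.choose ij.1 : ℝ) * ((p + ij.1)! * (q + ij.2)!) =
      p ! * q ! * (p + q + n + 1)! / (p + q + 1)! := by
  induction n generalizing p q with
  | zero => field_simp; simp
  | succ n ih =>
    rw [sum_antidiagonal_choose_succ_mul (fun i j => ((p + i)! * (q + j)! : ℝ))]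
    have hswap : ∀ ij ∈ antidiagonal n,
        (n.choose ij.2 : ℝ) * ((p + (ij.1 + 1))! * (q + ij.2)!) =
          n.choose ij.1 * ((p + 1 + ij.1)! * (q + ij.2)!) := fun ij hij => by
      rw [Nat.choose_symm_of_eq_add (mem_antidiagonal.mp hij).symm, ← add_assoc p,
        add_right_comm p]
    simp only [← add_assoc q, add_right_comm q _ 1]
    rw [sum_congr rfl hswap, ih, ih]
    simp only [show p + 1 + q = p + (q + 1) by ring,
      show p + (q + 1) + n + 1 = p + q + (n + 1) + 1 by ring,
      show p + (q + 1) + 1 = p + q + 1 + 1 by ring, factorial_succ]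
    push_cast
    field_simp
    ring

noncomputable def factorialSum (m : ℕ) : ℝ :=
  ∑ i ∈ range (m + 1), (i ! * (m + i + 1)! / (2 * i + 1)! : ℝ)

lemma sum_antidiagonal_choose_mul_factorial_eq_factorialSum (m n : ℕ) :
    ∑ ij ∈ antidiagonal m, ∑ kl ∈ antidiagonal n, ∑ ab ∈ antidiagonal (ij.2 + kl.1),
        (m.choose ij.1 * n.choose kl.1 * (ij.2 + kl.1).choose ab.1 : ℝ) *
          ((ij.1 + ab.1)! * (ij.1 + ab.2)! * (ij.2 + kl.2)!) =
      (2 * m + n + 2)! / (2 * m + 2)! * (m ! * factorialSum m) := by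
  have hinner : ∀ i j k l : ℕ,
      ∑ ab ∈ antidiagonal (j + k), (m.choose i * n.choose k * (j + k).choose ab.1 : ℝ) *
          ((i + ab.1)! * (i + ab.2)! * (j + l)!) =
        m.choose i * i ! * i ! / (2 * i + 1)! *
          (n.choose k * ((2 * i + j + 1 + k)! * (j + l)!)) := by
    intro i j k l
    calc _ = (m.choose i * n.choose k * (j + l)! : ℝ) * ∑ ab ∈ antidiagonal (j + k),
            ((j + k).choose ab.1 : ℝ) * ((i + ab.1)! * (i + ab.2)!) := by
          rw [mul_sum]
          exact sum_congr rfl fun _ _ => by ring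
      _ = _ := by
          rw [sum_antidiagonal_choose_mul_factorial_mul_factorial,
            show i + i + (j + k) + 1 = 2 * i + j + 1 + k by ring,
            show i + i + 1 = 2 * i + 1 by ring]
          ring
  simp_rw [hinner, ← mul_sum, sum_antidiagonal_choose_mul_factorial_mul_factorial]
  rw [factorialSum, mul_sum, mul_sum, Nat.sum_antidiagonal_eq_sum_range_succ_mk]
  refine sum_congr rfl fun i hi => ?_
  have him : i ≤ m := mem_range_succ_iff.mp hi
  have hchoose : (m.choose i * i ! * (m - i)! : ℝ) = m ! := by
    exact_mod_cast Nat.choose_mul_factorial_mul_factorial him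
  rw [show 2 * i + (m - i) + 1 = m + i + 1 by omega,
    show m + i + 1 + (m - i) + n + 1 = 2 * m + n + 2 by omega,
    show m + i + 1 + (m - i) + 1 = 2 * m + 2 by omega, ← hchoose]
  ring

lemma factorialSum_succ (m : ℕ) :
    factorialSum (m + 1) = 2 * (2 * m + 3) / 3 * factorialSum m + (m + 1)! := by
  set G : ℕ → ℝ := fun i => i ! * (m + i + 1)! / (2 * i)!
  have hterm : ∀ i, (i ! * (m + 1 + i + 1)! / (2 * i + 1)! : ℝ) =
      2 * (2 * m + 3) / 3 * (i ! * (m + i + 1)! / (2 * i + 1)!) + 2 / 3 * (G i - G (i + 1)) := by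
    intro i
    have hm : ((m + i + 1 + 1)! : ℝ) = (m + i + 2) * (m + i + 1)! := by
      push_cast [factorial_succ]; ring
    have hi : ((i + 1)! : ℝ) = (i + 1) * i ! := by push_cast [factorial_succ]; ring
    have h2i : ((2 * i + 1)! : ℝ) = (2 * i + 1) * (2 * i)! := by push_cast [factorial_succ]; ring
    have h2i' : ((2 * i + 1 + 1)! : ℝ) = (2 * i + 2) * (2 * i + 1) * (2 * i)! := by
      push_cast [factorial_succ]; ring
    simp only [G, show m + 1 + i + 1 = m + i + 1 + 1 by ring,
      show m + (i + 1) + 1 = m + i + 1 + 1 by ring, show 2 * (i + 1) = 2 * i + 1 + 1 by ring]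
    rw [hm, hi, h2i, h2i']
    field_simp
    ring
  rw [factorialSum, sum_range_succ, sum_congr rfl fun i _ => hterm i, sum_add_distrib, ← mul_sum,
    ← mul_sum, sum_range_sub', factorialSum]
  -- `G 0 = G (m + 1) = (m + 1)!`, so the telescoped part vanishes.
  simp only [G, show m + 1 + (m + 1) + 1 = 2 * (m + 1) + 1 by ring,
    show m + (m + 1) + 1 = 2 * (m + 1) by ring]
  field_simp
  ring

lemma poch_succ (y : ℝ) (m : ℕ) : poch y (m + 1) = poch y m * (y + m) :=
  prod_range_succ _ _

lemma poch_pos {y : ℝ} (hy : 0 < y) (m : ℕ) : 0 < poch y m :=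
  prod_pos fun i _ => by positivity

lemma factorialSum_eq (m : ℕ) :
    factorialSum m = (4 / 3 : ℝ) ^ m * poch (3 / 2) m *
      (1 + ∑ s ∈ Icc 1 m, (3 : ℝ) ^ s * s ! / ((4 : ℝ) ^ s * poch (3 / 2) s)) := by
  induction m with
  | zero => simp [factorialSum, poch]
  | succ m ih =>
    have hpoch := poch_pos (by norm_num : (0 : ℝ) < 3 / 2) m
    rw [factorialSum_succ, ih, sum_Icc_succ_top (by omega), poch_succ, div_pow, div_pow]
    generalize ∑ s ∈ Icc 1 m, (3 : ℝ) ^ s * s ! / ((4 : ℝ) ^ s * poch (3 / 2) s) = S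
    field_simp
    ring

theorem stmt9 (m n : ℕ) :
    ∫ x : Fin 3 → ℝ in Set.univ.pi fun _ => Set.Ici (0 : ℝ),
        (x 0 * x 1 + x 0 * x 2 + x 1 * x 2) ^ m * (x 0 + x 1 + x 2) ^ n *
          Real.exp (-(x 0 + x 1 + x 2)) =
      (m.factorial : ℝ) * ((2 * m + n + 2).factorial : ℝ) * poch ((3 : ℝ) / 2) m /
          ((2 * m + 2).factorial : ℝ) *
        ((4 : ℝ) / 3) ^ m *
        (1 + ∑ s ∈ Finset.Icc 1 m,
          (3 : ℝ) ^ s * (s.factorial : ℝ) / ((4 : ℝ) ^ s * poch ((3 : ℝ) / 2) s)) := by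
  rw [setIntegral_esymm_pow_mul_exp_neg_eq_sum,
    sum_antidiagonal_choose_mul_factorial_eq_factorialSum, factorialSum_eq]
  ring
end
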